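/- Theorem 2: When data is color-blind, there does not exist an ideal control. That is, no control k_cb (assigning to each X and each (μ_cb, f_cb) ∈ Δ°(X) × (0,1)^X a nonempty compact set of color-blind decision policies d_cb : X → [0,1]) satisfies both: (1) for every game and every discriminatory equilibrium (c̄*, d*_cb), every maximizer d̂_cb of U_F over k_cb(X, μ*_cb,RE, f*_cb,RE) strictly shrinks the interval between the two groups' acceptance rates relative to d*_cb; and (2) for every game, the set of k_cb-controlled equilibria equals the set of non-discriminatory equilibria. -/

import Mathlib

/-!
Formalization of the Coate–Loury statistical discrimination model with
machine-learning (contractible) beliefs, following Zhu,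
"The Impact of Equal Opportunity on Statistical Discrimination".
-/

open scoped BigOperators
open MeasureTheory

noncomputable section

attribute [local instance] Classical.propDecidable

/-- Group identities `I = {w, b}`. -/
inductive GrpI
  | w
  | b
deriving DecidableEq

instance : Fintype GrpI := ⟨{GrpI.w, GrpI.b}, fun x => by cases x <;> simp⟩

/-- Classes `Y = {q, u}` (qualified / unqualified). -/
inductive Cls
  | q
  | u
deriving DecidableEq

instance : Fintype Cls := ⟨{Cls.q, Cls.u}, fun x => by cases x <;> simp⟩

/-- A game `(X, λ_w, p, G, v_q, v_u, ω)` of the Coate–Loury model.  The set of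
other features is the finite product `X = X_1 × ⋯ × X_N`, encoded as the pi type
`(j : Fin N) → Xs j`.  The statistical model (Assumption 1) is encoded through a
nonempty subset `Ysub ⊆ {1, …, N}` together with the factorization
`p(x | i, y) = pY(x_𝒴 | y) · pC(x_{-𝒴} | i, x_𝒴)`.  The cost distribution is
given by an everywhere positive density `g` with `∫ g = 1` and `∫ |c| g(c) dc < ∞`. -/
structure Game (N : ℕ) (Xs : Fin N → Type) [∀ j, Fintype (Xs j)]
    [∀ j, Nonempty (Xs j)] where
  lamw : ℝ
  lamw_pos : 0 < lamw
  lamw_lt_one : lamw < 1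
  Ysub : Finset (Fin N)
  Ysub_nonempty : Ysub.Nonempty
  pY : ((j : Ysub) → Xs j.1) → Cls → ℝ
  pC : GrpI → ((j : Fin N) → Xs j) → ℝ
  pY_pos : ∀ xY y, 0 < pY xY y
  pC_pos : ∀ i x, 0 < pC i x
  pY_sum : ∀ y, ∑ xY, pY xY y = 1
  pC_sum : ∀ (i : GrpI) (xY : (j : Ysub) → Xs j.1),
    ∑ x ∈ Finset.univ.filter
        (fun x : (j : Fin N) → Xs j => (fun j : Ysub => x j.1) = xY),
      pC i x = 1
  g : ℝ → ℝ
  g_pos : ∀ c, 0 < g c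
  g_int : Integrable g
  g_norm : (∫ c, g c) = 1
  g_abs_int : Integrable fun c => |c| * g c
  vq : ℝ
  vu : ℝ
  om : ℝ
  vq_pos : 0 < vq
  vu_pos : 0 < vu
  om_pos : 0 < om

section Policies

variable {N : ℕ} {Xs : Fin N → Type}

/-- A decision policy `d : I × X → [0,1]`. -/
def IsPolicy (d : GrpI → ((j : Fin N) → Xs j) → ℝ) : Prop :=
  ∀ i x, d i x ∈ Set.Icc (0 : ℝ) 1

/-- A decision policy when data is color-blind, `d_cb : X → [0,1]`. -/
def IsCbPolicy (dcb : ((j : Fin N) → Xs j) → ℝ) : Prop :=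
  ∀ x, dcb x ∈ Set.Icc (0 : ℝ) 1

/-- `S ⊆ {1, …, N}` has the dependence property for the belief `f`:
`f` depends on `(i, x)` only up to `(i, x_S)`. -/
def DepProp {I : Type} (f : I → ((j : Fin N) → Xs j) → ℝ)
    (S : Finset (Fin N)) : Prop :=
  ∀ (i : I) (x x' : (j : Fin N) → Xs j), (∀ j ∈ S, x j = x' j) → f i x = f i x'

/-- The minimal subset `Ŷ(f)` with the dependence property. -/
def minDep {I : Type} (f : I → ((j : Fin N) → Xs j) → ℝ) : Finset (Fin N) :=
  Finset.univ.filter fun j => ∀ S : Finset (Fin N), DepProp f S → j ∈ S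

variable [∀ j, Fintype (Xs j)]

/-- Full-support probability distributions on `I × X` (the set `Δ°(I × X)`). -/
def FullSupp (μ : GrpI → ((j : Fin N) → Xs j) → ℝ) : Prop :=
  (∀ i x, 0 < μ i x) ∧ ∑ i, ∑ x, μ i x = 1

/-- Beliefs valued in `(0, 1)`. -/
def OpenBelief (f : GrpI → ((j : Fin N) → Xs j) → ℝ) : Prop :=
  ∀ i x, f i x ∈ Set.Ioo (0 : ℝ) 1

/-- Acceptance rate of group `i`. -/
def AR (i : GrpI) (d μ : GrpI → ((j : Fin N) → Xs j) → ℝ) : ℝ :=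
  (∑ x, d i x * μ i x) / ∑ x, μ i x

/-- True positive rate of group `i`. -/
def TP (i : GrpI) (d μ f : GrpI → ((j : Fin N) → Xs j) → ℝ) : ℝ :=
  (∑ x, d i x * μ i x * f i x) / ∑ x, μ i x * f i x

/-- The equal opportunity control `k(X, μ, f)`. -/
def EOset (μ f : GrpI → ((j : Fin N) → Xs j) → ℝ) :
    Set (GrpI → ((j : Fin N) → Xs j) → ℝ) :=
  {d | IsPolicy d ∧ TP GrpI.w d μ f = TP GrpI.b d μ f}

/-- The color-blind control: all color-blind decision policies. -/
def CBset : Set (GrpI → ((j : Fin N) → Xs j) → ℝ) :=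
  {d | IsPolicy d ∧ ∀ x, d GrpI.w x = d GrpI.b x}

/-- The no proxies control: policies depending on `(i,x)` only through `x_{Ŷ(f)}`. -/
def NoProxies (_μ f : GrpI → ((j : Fin N) → Xs j) → ℝ) :
    Set (GrpI → ((j : Fin N) → Xs j) → ℝ) :=
  {d | IsPolicy d ∧
    ∀ i i' x x', (∀ j ∈ minDep f, x j = x' j) → d i x = d i' x'}

/-- `ℓ²` distance between decision policies. -/
def polDist (d d' : GrpI → ((j : Fin N) → Xs j) → ℝ) : ℝ :=
  Real.sqrt (∑ i, ∑ x, (d i x - d' i x) ^ 2)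

/-- `ℓ²` distance between pairs `(μ, f)`. -/
def pairDist (μ f μ' f' : GrpI → ((j : Fin N) → Xs j) → ℝ) : ℝ :=
  Real.sqrt ((∑ i, ∑ x, (μ i x - μ' i x) ^ 2) + ∑ i, ∑ x, (f i x - f' i x) ^ 2)

/-- `ℓ²` distance between strategy profiles `(c̄, d)`. -/
def profDist (c : GrpI → ℝ) (d : GrpI → ((j : Fin N) → Xs j) → ℝ)
    (c' : GrpI → ℝ) (d' : GrpI → ((j : Fin N) → Xs j) → ℝ) : ℝ :=
  Real.sqrt ((∑ i, (c i - c' i) ^ 2) + ∑ i, ∑ x, (d i x - d' i x) ^ 2)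

end Policies

/-- Upper hemicontinuity of a correspondence on a set. -/
def UpperHemicontinuousOn' {α β : Type*} [TopologicalSpace α] [TopologicalSpace β]
    (F : α → Set β) (S : Set α) : Prop :=
  ∀ a ∈ S, ∀ V : Set β, IsOpen V → F a ⊆ V → ∀ᶠ a' in nhdsWithin a S, F a' ⊆ V

/-- Lower hemicontinuity of a correspondence on a set. -/
def LowerHemicontinuousOn' {α β : Type*} [TopologicalSpace α] [TopologicalSpace β]
    (F : α → Set β) (S : Set α) : Prop :=
  ∀ a ∈ S, ∀ V : Set β, IsOpen V → (F a ∩ V).Nonempty →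
    ∀ᶠ a' in nhdsWithin a S, (F a' ∩ V).Nonempty

namespace Game

variable {N : ℕ} {Xs : Fin N → Type} [∀ j, Fintype (Xs j)] [∀ j, Nonempty (Xs j)]
variable (Γ : Game N Xs)

/-- Projection `x ↦ x_𝒴`. -/
def proj (x : (j : Fin N) → Xs j) : (j : Γ.Ysub) → Xs j.1 := fun j => x j.1

/-- `p(x | i, y) = p(x_𝒴 | y) · p(x_{-𝒴} | i, x_𝒴)`. -/
def p (i : GrpI) (x : (j : Fin N) → Xs j) (y : Cls) : ℝ :=
  Γ.pY (Γ.proj x) y * Γ.pC i x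

/-- Group probabilities `λ_w`, `λ_b = 1 - λ_w`. -/
def lam : GrpI → ℝ := fun i =>
  match i with
  | GrpI.w => Γ.lamw
  | GrpI.b => 1 - Γ.lamw

/-- The CDF `G` of the cost distribution. -/
def G (c : ℝ) : ℝ := ∫ t in Set.Iic c, Γ.g t

/-- The likelihood function `l(x) = p(x_𝒴 | q) / p(x_𝒴 | u)`. -/
def lhd (x : (j : Fin N) → Xs j) : ℝ :=
  Γ.pY (Γ.proj x) Cls.q / Γ.pY (Γ.proj x) Cls.u

/-- The likelihood function on `X_𝒴`. -/
def lhdY (xY : (j : Γ.Ysub) → Xs j.1) : ℝ := Γ.pY xY Cls.q / Γ.pY xY Cls.u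

/-- The set of likelihood values `{l_1 < … < l_n}`. -/
def LVset : Set ℝ := Set.range Γ.lhd

/-- The assumption that `1` is not a likelihood value
(equivalently, `WW` is single-peaked). -/
def OneNotLV : Prop := (1 : ℝ) ∉ Γ.LVset

/-- The largest likelihood value `l_n`. -/
def lmax : ℝ := sSup Γ.LVset

/-- `⌈ℓ⌉`: the smallest likelihood value `≥ ℓ`. -/
def lceil (ℓ : ℝ) : ℝ := sInf {v | v ∈ Γ.LVset ∧ ℓ ≤ v}

/-- `⌈ℓ⌉⁻`: the next smallest likelihood value below `⌈ℓ⌉` (or `l_0 = 0`). -/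
def lceilm (ℓ : ℝ) : ℝ := sSup (insert 0 {v | v ∈ Γ.LVset ∧ v < Γ.lceil ℓ})

/-- The smallest likelihood value `> ℓ`. -/
def lnext (ℓ : ℝ) : ℝ := sInf {v | v ∈ Γ.LVset ∧ ℓ < v}

/-- The true distribution of features `μ_RE` given cost thresholds `c̄`. -/
def muRE (c : GrpI → ℝ) (i : GrpI) (x : (j : Fin N) → Xs j) : ℝ :=
  Γ.lam i * (Γ.G (c i) * Γ.p i x Cls.q + (1 - Γ.G (c i)) * Γ.p i x Cls.u)

/-- The true conditional probability (calibrated belief) `f_RE` given `c̄`. -/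
def fRE (c : GrpI → ℝ) (i : GrpI) (x : (j : Fin N) → Xs j) : ℝ :=
  Γ.G (c i) * Γ.p i x Cls.q /
    (Γ.G (c i) * Γ.p i x Cls.q + (1 - Γ.G (c i)) * Γ.p i x Cls.u)

/-- Utility `U_i(c̄(i), d(i))` of the representative `i`-applicant. -/
def Uapp (i : GrpI) (ci : ℝ) (di : ((j : Fin N) → Xs j) → ℝ) : ℝ :=
  Γ.om * ∑ x, (Γ.G ci * Γ.p i x Cls.q + (1 - Γ.G ci) * Γ.p i x Cls.u) * di x -
    ∫ t in Set.Iic ci, t * Γ.g t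

/-- Firm utility `U_F(d, μ, f)`. -/
def UF (d μ f : GrpI → ((j : Fin N) → Xs j) → ℝ) : ℝ :=
  ∑ i, ∑ x, d i x * μ i x * (f i x * Γ.vq - (1 - f i x) * Γ.vu)

/-- The color-blind true distribution of features `μ_cb,RE`. -/
def mucbRE (c : GrpI → ℝ) (x : (j : Fin N) → Xs j) : ℝ :=
  Γ.muRE c GrpI.w x + Γ.muRE c GrpI.b x

/-- The color-blind true conditional probability `f_cb,RE`. -/
def fcbRE (c : GrpI → ℝ) (x : (j : Fin N) → Xs j) : ℝ :=
  (Γ.muRE c GrpI.w x * Γ.fRE c GrpI.w x + Γ.muRE c GrpI.b x * Γ.fRE c GrpI.b x) /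
    Γ.mucbRE c x

/-- Firm utility when data is color-blind. -/
def UFcb (dcb μcb fcb : ((j : Fin N) → Xs j) → ℝ) : ℝ :=
  ∑ x, dcb x * μcb x * (fcb x * Γ.vq - (1 - fcb x) * Γ.vu)

/-- `d(i | l_m)`: conditional acceptance probability at likelihood value `lv`. -/
def dcond (i : GrpI) (di : ((j : Fin N) → Xs j) → ℝ) (lv : ℝ) : ℝ :=
  (∑ x ∈ Finset.univ.filter (fun x => Γ.lhd x = lv), Γ.p i x Cls.q * di x) /
    ∑ x ∈ Finset.univ.filter (fun x => Γ.lhd x = lv), Γ.p i x Cls.q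

/-- The within-group policy `d(i)` is associated with the likelihood mixture `ℓ`. -/
def AssociatedWith (i : GrpI) (di : ((j : Fin N) → Xs j) → ℝ) (ℓ : ℝ) : Prop :=
  0 ≤ ℓ ∧ ℓ ≤ Γ.lmax ∧
    ∀ lv ∈ Γ.LVset,
      (Γ.lceil ℓ < lv → Γ.dcond i di lv = 1) ∧
      (lv = Γ.lceil ℓ →
        Γ.dcond i di lv = (Γ.lceil ℓ - ℓ) / (Γ.lceil ℓ - Γ.lceilm ℓ)) ∧
      (lv < Γ.lceil ℓ → Γ.dcond i di lv = 0)

/-- A decision policy is fair if both within-group policies are associated with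
the same likelihood mixture. -/
def Fair (d : GrpI → ((j : Fin N) → Xs j) → ℝ) : Prop :=
  ∃ ℓ, Γ.AssociatedWith GrpI.w (d GrpI.w) ℓ ∧ Γ.AssociatedWith GrpI.b (d GrpI.b) ℓ

/-- `WW(l_m) = ω ∑_{x_𝒴 : l(x_𝒴) > l_m} (p(x_𝒴|q) - p(x_𝒴|u))`. -/
def WWval (t : ℝ) : ℝ :=
  Γ.om * ∑ xY ∈ Finset.univ.filter (fun xY => t < Γ.lhdY xY),
    (Γ.pY xY Cls.q - Γ.pY xY Cls.u)

/-- The piecewise-linear function `WW` interpolating the points `(l_m, WW(l_m))`. -/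
def WW (ℓ : ℝ) : ℝ :=
  if Γ.lceil ℓ = Γ.lceilm ℓ then Γ.WWval (Γ.lceil ℓ)
  else
    (Γ.WWval (Γ.lceilm ℓ) * (Γ.lceil ℓ - ℓ) +
        Γ.WWval (Γ.lceil ℓ) * (ℓ - Γ.lceilm ℓ)) /
      (Γ.lceil ℓ - Γ.lceilm ℓ)

/-- `EĒ(l_m)`: the unique cost with `G(EĒ(l_m)) = 1 / ((v_q/v_u) l_m + 1)`. -/
def EEbar (lv : ℝ) : ℝ := sInf {cc | 1 / (Γ.vq / Γ.vu * lv + 1) ≤ Γ.G cc}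

/-- The correspondence `EE : [0, l_n] ⇒ ℝ`. -/
def EE (ℓ : ℝ) : Set ℝ :=
  if ℓ = 0 then Set.Ici (Γ.EEbar (Γ.lceil 0))
  else if ℓ = Γ.lmax then Set.Iic (Γ.EEbar Γ.lmax)
  else if ℓ ∈ Γ.LVset then Set.Icc (Γ.EEbar (Γ.lnext ℓ)) (Γ.EEbar ℓ)
  else {Γ.EEbar (Γ.lceil ℓ)}

/-- Each representative applicant's cost threshold is a best response to `d`. -/
def BestResponds (c : GrpI → ℝ) (d : GrpI → ((j : Fin N) → Xs j) → ℝ) : Prop :=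
  ∀ (i : GrpI) (c' : ℝ), Γ.Uapp i c' (d i) ≤ Γ.Uapp i (c i) (d i)

/-- An (un-controlled) equilibrium. -/
def IsEquilibrium (c : GrpI → ℝ) (d : GrpI → ((j : Fin N) → Xs j) → ℝ) : Prop :=
  IsPolicy d ∧ Γ.BestResponds c d ∧
    ∀ d', IsPolicy d' →
      Γ.UF d' (Γ.muRE c) (Γ.fRE c) ≤ Γ.UF d (Γ.muRE c) (Γ.fRE c)

/-- A `k`-controlled equilibrium, for the control `(μ, f) ↦ K μ f`. -/
def IsControlledEq
    (K : (GrpI → ((j : Fin N) → Xs j) → ℝ) → (GrpI → ((j : Fin N) → Xs j) → ℝ) →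
      Set (GrpI → ((j : Fin N) → Xs j) → ℝ))
    (c : GrpI → ℝ) (d : GrpI → ((j : Fin N) → Xs j) → ℝ) : Prop :=
  d ∈ K (Γ.muRE c) (Γ.fRE c) ∧ Γ.BestResponds c d ∧
    ∀ d' ∈ K (Γ.muRE c) (Γ.fRE c),
      Γ.UF d' (Γ.muRE c) (Γ.fRE c) ≤ Γ.UF d (Γ.muRE c) (Γ.fRE c)

/-- `𝒮_k(μ, f)`: firm-optimal policies under the control `K` at `(μ, f)`. -/
def Smax
    (K : (GrpI → ((j : Fin N) → Xs j) → ℝ) → (GrpI → ((j : Fin N) → Xs j) → ℝ) →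
      Set (GrpI → ((j : Fin N) → Xs j) → ℝ))
    (μ f : GrpI → ((j : Fin N) → Xs j) → ℝ) :
    Set (GrpI → ((j : Fin N) → Xs j) → ℝ) :=
  {d | d ∈ K μ f ∧ ∀ d' ∈ K μ f, Γ.UF d' μ f ≤ Γ.UF d μ f}

/-- A `k`-controlled `ε`-equilibrium. -/
def IsCtrlEpsEq
    (K : (GrpI → ((j : Fin N) → Xs j) → ℝ) → (GrpI → ((j : Fin N) → Xs j) → ℝ) →
      Set (GrpI → ((j : Fin N) → Xs j) → ℝ))
    (ε : ℝ) (c : GrpI → ℝ) (d : GrpI → ((j : Fin N) → Xs j) → ℝ) : Prop :=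
  ∃ μ f, FullSupp μ ∧ OpenBelief f ∧
    pairDist μ f (Γ.muRE c) (Γ.fRE c) ≤ ε ∧
    Γ.BestResponds c d ∧ d ∈ K μ f ∧ ∀ d' ∈ K μ f, Γ.UF d' μ f ≤ Γ.UF d μ f

/-- Best responses of applicants to a color-blind policy. -/
def BestRespondsCb (c : GrpI → ℝ) (dcb : ((j : Fin N) → Xs j) → ℝ) : Prop :=
  ∀ (i : GrpI) (c' : ℝ), Γ.Uapp i c' dcb ≤ Γ.Uapp i (c i) dcb

/-- An equilibrium when data is color-blind (unrestricted control). -/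
def IsCbEquilibrium (c : GrpI → ℝ) (dcb : ((j : Fin N) → Xs j) → ℝ) : Prop :=
  IsCbPolicy dcb ∧ Γ.BestRespondsCb c dcb ∧
    ∀ dcb', IsCbPolicy dcb' →
      Γ.UFcb dcb' (Γ.mucbRE c) (Γ.fcbRE c) ≤ Γ.UFcb dcb (Γ.mucbRE c) (Γ.fcbRE c)

/-- A `k_cb`-controlled equilibrium when data is color-blind. -/
def IsCbControlledEq (K : Set (((j : Fin N) → Xs j) → ℝ)) (c : GrpI → ℝ)
    (dcb : ((j : Fin N) → Xs j) → ℝ) : Prop :=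
  dcb ∈ K ∧ Γ.BestRespondsCb c dcb ∧
    ∀ dcb' ∈ K,
      Γ.UFcb dcb' (Γ.mucbRE c) (Γ.fcbRE c) ≤ Γ.UFcb dcb (Γ.mucbRE c) (Γ.fcbRE c)

end Game

/-- A control when data is color-blind: for each `X` and each
`(μ_cb, f_cb) ∈ Δ°(X) × (0,1)^X` it specifies a nonempty compact set of
color-blind decision policies. -/
structure CbControl : Type 1 where
  sets : ∀ (N : ℕ) (Xs : Fin N → Type) [∀ j, Fintype (Xs j)] [∀ j, Nonempty (Xs j)],
    (((j : Fin N) → Xs j) → ℝ) → (((j : Fin N) → Xs j) → ℝ) →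
      Set (((j : Fin N) → Xs j) → ℝ)
  nonempty : ∀ (N : ℕ) (Xs : Fin N → Type) [∀ j, Fintype (Xs j)]
    [∀ j, Nonempty (Xs j)] (μ f : ((j : Fin N) → Xs j) → ℝ),
    (∀ x, 0 < μ x) → (∑ x, μ x = 1) → (∀ x, f x ∈ Set.Ioo (0 : ℝ) 1) →
    (sets N Xs μ f).Nonempty
  compact : ∀ (N : ℕ) (Xs : Fin N → Type) [∀ j, Fintype (Xs j)]
    [∀ j, Nonempty (Xs j)] (μ f : ((j : Fin N) → Xs j) → ℝ),
    (∀ x, 0 < μ x) → (∑ x, μ x = 1) → (∀ x, f x ∈ Set.Ioo (0 : ℝ) 1) →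
    IsCompact (sets N Xs μ f)
  mem_policy : ∀ (N : ℕ) (Xs : Fin N → Type) [∀ j, Fintype (Xs j)]
    [∀ j, Nonempty (Xs j)] (μ f : ((j : Fin N) → Xs j) → ℝ),
    (∀ x, 0 < μ x) → (∑ x, μ x = 1) → (∀ x, f x ∈ Set.Ioo (0 : ℝ) 1) →
    sets N Xs μ f ⊆ {dcb | IsCbPolicy dcb}

/-!
The firm sees only the colour-blind pair `(μ_cb, f_cb)`, and this pair depends on a game and
its cost thresholds only through the masses `∑ᵢ λᵢ G(c̄(i)) p(x|i,q)` and
`∑ᵢ λᵢ (1 - G(c̄(i))) p(x|i,u)` of qualified and unqualified applicants at each `x`.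
In `discGame` a proxy feature is distributed differently in the two groups, so the two groups
invest differently against a colour-blind policy and the equilibrium is discriminatory. In
`pooledGame` the features follow the pooled law of that equilibrium independently of the group,
so the same policy is a non-discriminatory equilibrium with the same `(μ_cb, f_cb)`.
Property (2) applied to `pooledGame` makes this policy a firm optimum over the control set;
property (1) applied to `discGame` then requires it to strictly shrink its own
acceptance-rate interval.
-/

namespace Laplace
open Real Set

def pdf (t : ℝ) : ℝ := exp (-|t|) / 2

lemma pdf_pos (t : ℝ) : 0 < pdf t := by unfold pdf; positivity

lemma integrable_exp_neg_mul_abs {a : ℝ} (ha : 0 < a) :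
    Integrable fun t : ℝ => exp (-(a * |t|)) := by
  have hIic : IntegrableOn (fun t : ℝ => exp (-(a * |t|))) (Iic 0) :=
    (integrableOn_exp_mul_Iic ha 0).congr_fun
      (fun t ht => by simp [abs_of_nonpos (mem_Iic.mp ht)]) measurableSet_Iic
  have hIoi : IntegrableOn (fun t : ℝ => exp (-(a * |t|))) (Ioi 0) :=
    (integrableOn_exp_mul_Ioi (neg_neg_of_pos ha) 0).congr_fun
      (fun t ht => by simp [abs_of_pos (mem_Ioi.mp ht)]) measurableSet_Ioi
  simpa [← integrableOn_univ] using hIic.union hIoi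

lemma integrable_pdf : Integrable pdf := by
  show Integrable fun t => exp (-|t|) / 2
  simpa using (integrable_exp_neg_mul_abs one_pos).div_const 2

lemma integrable_abs_mul_pdf : Integrable fun t => |t| * pdf t := by
  refine (integrable_exp_neg_mul_abs (a := 1 / 2) (by norm_num)).mono'
    (by unfold pdf; fun_prop) (Filter.Eventually.of_forall fun t => ?_)
  set e := exp (-(1 / 2 * |t|))
  have hhalf : |t| / 2 ≤ exp (|t| / 2) :=
    (le_add_of_nonneg_right zero_le_one).trans (add_one_le_exp _)
  rw [Real.norm_of_nonneg (mul_nonneg (abs_nonneg t) (pdf_pos t).le)]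
  calc |t| * pdf t = |t| / 2 * e * e := by rw [pdf, mul_assoc, ← exp_add]; ring_nf
    _ ≤ exp (|t| / 2) * e * e := by gcongr
    _ = e := by rw [← exp_add]; ring_nf; simp

lemma integral_Ioi_pdf {c : ℝ} (hc : 0 ≤ c) : ∫ t in Ioi c, pdf t = exp (-c) / 2 := by
  rw [setIntegral_congr_fun measurableSet_Ioi (g := fun t => exp (-t) / 2) (fun t ht => by
      simp [pdf, abs_of_pos (hc.trans_lt (mem_Ioi.mp ht))]),
    integral_div, integral_exp_neg_Ioi]

lemma integral_pdf : ∫ t, pdf t = 1 := by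
  have hIic : ∫ t in Iic 0, pdf t = 1 / 2 := by
    rw [setIntegral_congr_fun measurableSet_Iic (g := fun t => exp t / 2) (fun t ht => by
        simp [pdf, abs_of_nonpos (mem_Iic.mp ht)]),
      integral_div, integral_exp_Iic_zero]
  rw [← intervalIntegral.integral_Iic_add_Ioi integrable_pdf.integrableOn
    integrable_pdf.integrableOn, hIic, integral_Ioi_pdf le_rfl]
  norm_num

lemma integral_Iic_pdf {c : ℝ} (hc : 0 ≤ c) : ∫ t in Iic c, pdf t = 1 - exp (-c) / 2 := by
  rw [← integral_pdf, ← intervalIntegral.integral_Iic_add_Ioi (b := c)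
    integrable_pdf.integrableOn integrable_pdf.integrableOn, integral_Ioi_pdf hc]
  ring

lemma integral_Iic_pdf_log {r : ℝ} (hr : 1 ≤ r) :
    ∫ t in Iic (log r), pdf t = 1 - 1 / (2 * r) := by
  rw [integral_Iic_pdf (log_nonneg hr), exp_neg, exp_log (by linarith)]
  ring

end Laplace

open Set in
lemma setIntegral_Iic_sub_mul_le {g : ℝ → ℝ} (hg : ∀ t, 0 ≤ g t) {K : ℝ}
    (hint : Integrable fun t => (K - t) * g t) (c : ℝ) :
    ∫ t in Iic c, (K - t) * g t ≤ ∫ t in Iic K, (K - t) * g t := by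
  rw [← sub_nonneg, intervalIntegral.integral_Iic_sub_Iic hint.integrableOn hint.integrableOn]
  rcases le_total c K with h | h
  · exact intervalIntegral.integral_nonneg h fun t ht =>
      mul_nonneg (sub_nonneg.mpr ht.2) (hg t)
  · rw [intervalIntegral.integral_of_ge h, neg_nonneg]
    exact setIntegral_nonpos measurableSet_Ioc fun t ht =>
      mul_nonpos_of_nonpos_of_nonneg (sub_nonpos.mpr ht.1.le) (hg t)

lemma sum_mul_le_sum_mul_of_mem_Icc {X : Type*} [Fintype X] {w d d' : X → ℝ}
    (hd' : ∀ x, d' x ∈ Set.Icc (0 : ℝ) 1)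
    (hd : ∀ x, (0 < w x → d x = 1) ∧ (w x < 0 → d x = 0)) :
    ∑ x, d' x * w x ≤ ∑ x, d x * w x := by
  refine Finset.sum_le_sum fun x _ => ?_
  rcases lt_trichotomy (w x) 0 with h | h | h
  · rw [(hd x).2 h, zero_mul]
    exact mul_nonpos_of_nonneg_of_nonpos (hd' x).1 h.le
  · simp [h]
  · rw [(hd x).1 h, one_mul]
    exact mul_le_of_le_one_left h.le (hd' x).2

namespace Game
open Set

variable {N : ℕ} {Xs : Fin N → Type} [∀ j, Fintype (Xs j)] [∀ j, Nonempty (Xs j)]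
  (Γ : Game N Xs)

lemma G_nonneg (c : ℝ) : 0 ≤ Γ.G c :=
  setIntegral_nonneg measurableSet_Iic fun t _ => (Γ.g_pos t).le

lemma G_le_one (c : ℝ) : Γ.G c ≤ 1 :=
  Γ.g_norm ▸ setIntegral_le_integral Γ.g_int (ae_of_all _ fun t => (Γ.g_pos t).le)

lemma lam_pos (i : GrpI) : 0 < Γ.lam i := by
  cases i
  · exact Γ.lamw_pos
  · exact sub_pos.mpr Γ.lamw_lt_one

lemma p_pos (i : GrpI) (x : (j : Fin N) → Xs j) (y : Cls) : 0 < Γ.p i x y :=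
  mul_pos (Γ.pY_pos _ y) (Γ.pC_pos i x)

lemma integrable_mul_g : Integrable fun t => t * Γ.g t :=
  Γ.g_abs_int.mono' (continuous_id.aestronglyMeasurable.mul Γ.g_int.aestronglyMeasurable)
    (Filter.Eventually.of_forall fun t => by
      rw [Real.norm_eq_abs, abs_mul, abs_of_pos (Γ.g_pos t)])

lemma integrable_sub_mul_g (K : ℝ) : Integrable fun t => (K - t) * Γ.g t := by
  refine ((Γ.g_int.const_mul K).sub Γ.integrable_mul_g).congr (ae_of_all _ fun t => ?_)
  simp only [Pi.sub_apply, sub_mul]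

/-- The marginal benefit of investing against the policy `d`. -/
def gain (i : GrpI) (d : ((j : Fin N) → Xs j) → ℝ) : ℝ :=
  Γ.om * ∑ x, (Γ.p i x Cls.q - Γ.p i x Cls.u) * d x

lemma Uapp_eq (i : GrpI) (c : ℝ) (d : ((j : Fin N) → Xs j) → ℝ) :
    Γ.Uapp i c d =
      Γ.om * ∑ x, Γ.p i x Cls.u * d x + ∫ t in Iic c, (Γ.gain i d - t) * Γ.g t := by
  have hsplit : ∫ t in Iic c, (Γ.gain i d - t) * Γ.g t =
      Γ.gain i d * Γ.G c - ∫ t in Iic c, t * Γ.g t := by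
    simp_rw [sub_mul]
    rw [integral_sub (Γ.g_int.const_mul _).integrableOn Γ.integrable_mul_g.integrableOn,
      integral_const_mul, G]
  have hsum : ∑ x, (Γ.G c * Γ.p i x Cls.q + (1 - Γ.G c) * Γ.p i x Cls.u) * d x =
      ∑ x, Γ.p i x Cls.u * d x + Γ.G c * ∑ x, (Γ.p i x Cls.q - Γ.p i x Cls.u) * d x := by
    rw [Finset.mul_sum, ← Finset.sum_add_distrib]
    exact Finset.sum_congr rfl fun x _ => by ring
  rw [Uapp, hsplit, hsum, gain]
  ring

lemma bestRespondsCb_gain (d : ((j : Fin N) → Xs j) → ℝ) :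
    Γ.BestRespondsCb (fun i => Γ.gain i d) d := by
  intro i c
  simp only [Γ.Uapp_eq]
  exact (add_le_add_iff_left _).mpr
    (setIntegral_Iic_sub_mul_le (fun t => (Γ.g_pos t).le) (Γ.integrable_sub_mul_g _) c)

lemma mix_pos (c : ℝ) (i : GrpI) (x : (j : Fin N) → Xs j) :
    0 < Γ.G c * Γ.p i x Cls.q + (1 - Γ.G c) * Γ.p i x Cls.u := by
  rcases (Γ.G_nonneg c).eq_or_lt with h | h
  · simpa [← h] using Γ.p_pos i x Cls.u
  · exact add_pos_of_pos_of_nonneg (mul_pos h (Γ.p_pos i x Cls.q))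
      (mul_nonneg (sub_nonneg.mpr (Γ.G_le_one c)) (Γ.p_pos i x Cls.u).le)

lemma muRE_pos (c : GrpI → ℝ) (i : GrpI) (x : (j : Fin N) → Xs j) : 0 < Γ.muRE c i x :=
  mul_pos (Γ.lam_pos i) (Γ.mix_pos _ i x)

lemma muRE_mul_fRE (c : GrpI → ℝ) (i : GrpI) (x : (j : Fin N) → Xs j) :
    Γ.muRE c i x * Γ.fRE c i x = Γ.lam i * (Γ.G (c i) * Γ.p i x Cls.q) := by
  have := (Γ.mix_pos (c i) i x).ne'
  rw [muRE, fRE]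
  field_simp

def qualMass (c : GrpI → ℝ) (x : (j : Fin N) → Xs j) : ℝ :=
  Γ.lam GrpI.w * (Γ.G (c GrpI.w) * Γ.p GrpI.w x Cls.q) +
    Γ.lam GrpI.b * (Γ.G (c GrpI.b) * Γ.p GrpI.b x Cls.q)

def unqualMass (c : GrpI → ℝ) (x : (j : Fin N) → Xs j) : ℝ :=
  Γ.lam GrpI.w * ((1 - Γ.G (c GrpI.w)) * Γ.p GrpI.w x Cls.u) +
    Γ.lam GrpI.b * ((1 - Γ.G (c GrpI.b)) * Γ.p GrpI.b x Cls.u)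

lemma mucbRE_eq_add (c : GrpI → ℝ) (x : (j : Fin N) → Xs j) :
    Γ.mucbRE c x = Γ.qualMass c x + Γ.unqualMass c x := by
  simp only [mucbRE, muRE, qualMass, unqualMass]
  ring

lemma fcbRE_eq_div (c : GrpI → ℝ) (x : (j : Fin N) → Xs j) :
    Γ.fcbRE c x = Γ.qualMass c x / Γ.mucbRE c x := by
  rw [fcbRE, muRE_mul_fRE, muRE_mul_fRE, qualMass]

lemma UFcb_eq (d : ((j : Fin N) → Xs j) → ℝ) (c : GrpI → ℝ) :
    Γ.UFcb d (Γ.mucbRE c) (Γ.fcbRE c) =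
      ∑ x, d x * (Γ.vq * Γ.qualMass c x - Γ.vu * Γ.unqualMass c x) := by
  refine Finset.sum_congr rfl fun x _ => ?_
  have hμ : Γ.mucbRE c x ≠ 0 := (add_pos (Γ.muRE_pos c _ x) (Γ.muRE_pos c _ x)).ne'
  rw [Γ.fcbRE_eq_div, ← sub_eq_zero]
  field_simp
  rw [Γ.mucbRE_eq_add]
  ring

variable {Γ} {Γ' : Game N Xs} {c c' : GrpI → ℝ}

lemma mucbRE_eq_of_mass_eq (hq : Γ.qualMass c = Γ'.qualMass c')
    (hu : Γ.unqualMass c = Γ'.unqualMass c') : Γ.mucbRE c = Γ'.mucbRE c' :=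
  funext fun x => by rw [mucbRE_eq_add, mucbRE_eq_add, hq, hu]

lemma fcbRE_eq_of_mass_eq (hq : Γ.qualMass c = Γ'.qualMass c')
    (hu : Γ.unqualMass c = Γ'.unqualMass c') : Γ.fcbRE c = Γ'.fcbRE c' :=
  funext fun x => by rw [fcbRE_eq_div, fcbRE_eq_div, mucbRE_eq_of_mass_eq hq hu, hq]

end Game

namespace ColorBlindExample
open Real Finset

abbrev X2 := Fin 2 → Bool

lemma sum_X2 (F : X2 → ℝ) : ∑ x, F x = ∑ s, ∑ z, F ![s, z] := by
  rw [← (piFinTwoEquiv fun _ => Bool).symm.sum_comp, Fintype.sum_prod_type]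
  rfl

lemma X2_eq_cons (x : X2) : ∃ s z, x = ![s, z] :=
  ⟨x 0, x 1, funext fun j => by fin_cases j <;> rfl⟩

def bern (a : ℝ) (s : Bool) : ℝ := if s then a else 1 - a

lemma bern_pos {a : ℝ} (h0 : 0 < a) (h1 : a < 1) (s : Bool) : 0 < bern a s := by
  cases s <;> simp [bern, h0, h1]

lemma sum_bern (a : ℝ) : ∑ s, bern a s = 1 := by simp [bern]

-- A feature vector is `![s, z]`: `s` is informative about the class, `z` is a proxy for the
-- group. These are the probabilities that `s`, resp. `z`, is `true`.
def sRate : Cls → ℝ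
  | Cls.q => 2 / 3
  | Cls.u => 1 / 3

def zRate : GrpI → ℝ
  | GrpI.w => 1 / 2
  | GrpI.b => 1 / 4

-- The law of `z` given the class in the pooled population of `discGame` at its equilibrium,
-- where the groups have qualified shares `7/8` and `3/4`.
def pooledZRate : Cls → ℝ
  | Cls.q => 5 / 13
  | Cls.u => 1 / 3

lemma sRate_mem (y : Cls) : 0 < sRate y ∧ sRate y < 1 := by cases y <;> norm_num [sRate]

lemma zRate_mem (i : GrpI) : 0 < zRate i ∧ zRate i < 1 := by cases i <;> norm_num [zRate]

lemma pooledZRate_mem (y : Cls) : 0 < pooledZRate y ∧ pooledZRate y < 1 := by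
  cases y <;> norm_num [pooledZRate]

lemma mem_zero : (0 : Fin 2) ∈ ({0} : Finset (Fin 2)) := mem_singleton_self 0

/-- `x ↦ x_𝒴` for `𝒴 = univ`. -/
def restrictUniv : X2 ≃ ((j : (univ : Finset (Fin 2))) → Bool) where
  toFun x j := x j.1
  invFun xY j := xY ⟨j, mem_univ j⟩
  left_inv _ := rfl
  right_inv _ := rfl

-- `ω` makes the equilibrium thresholds `log 4` and `log 2`, where `G = 7/8` and `3/4`.
def discGame : Game 2 fun _ => Bool where
  lamw := 1 / 2
  lamw_pos := by norm_num
  lamw_lt_one := by norm_num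
  Ysub := {0}
  Ysub_nonempty := singleton_nonempty 0
  pY xY y := bern (sRate y) (xY ⟨0, mem_zero⟩)
  pC i x := bern (zRate i) (x 1)
  pY_pos _ y := bern_pos (sRate_mem y).1 (sRate_mem y).2 _
  pC_pos i _ := bern_pos (zRate_mem i).1 (zRate_mem i).2 _
  pY_sum y := by
    rw [← (Equiv.funUnique _ Bool).symm.sum_comp]
    exact sum_bern _
  pC_sum i xY := by
    have hfiber (s z : Bool) : (fun j : ({0} : Finset (Fin 2)) => (![s, z] : X2) j.1) = xY ↔
        s = xY ⟨0, mem_zero⟩ :=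
      (Equiv.funUnique _ Bool).injective.eq_iff.symm
    rw [sum_filter, sum_X2]
    simp [hfiber, bern]
  g := Laplace.pdf
  g_pos := Laplace.pdf_pos
  g_int := Laplace.integrable_pdf
  g_norm := Laplace.integral_pdf
  g_abs_int := Laplace.integrable_abs_mul_pdf
  vq := 1
  vu := 9
  om := 12 * log 2
  vq_pos := one_pos
  vu_pos := by norm_num
  om_pos := by positivity

-- `ω` makes the equilibrium threshold `log (8/3)`, where `G = 13/16` is the qualified share
-- of the pooled population of `discGame`.
def pooledGame : Game 2 fun _ => Bool where
  lamw := 1 / 2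
  lamw_pos := by norm_num
  lamw_lt_one := by norm_num
  Ysub := univ
  Ysub_nonempty := univ_nonempty
  pY xY y := bern (sRate y) (xY ⟨0, mem_univ 0⟩) * bern (pooledZRate y) (xY ⟨1, mem_univ 1⟩)
  pC _ _ := 1
  pY_pos _ y := mul_pos (bern_pos (sRate_mem y).1 (sRate_mem y).2 _)
    (bern_pos (pooledZRate_mem y).1 (pooledZRate_mem y).2 _)
  pC_pos _ _ := one_pos
  pY_sum y := by
    rw [← restrictUniv.sum_comp, sum_X2]
    simp only [restrictUniv, Equiv.coe_fn_mk, Matrix.cons_val_zero, Matrix.cons_val_one,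
      ← Finset.mul_sum, ← Finset.sum_mul, sum_bern, one_mul]
  pC_sum _ xY := by
    have hfiber (x : X2) : (fun j : (univ : Finset (Fin 2)) => x j.1) = xY ↔
        x = restrictUniv.symm xY :=
      restrictUniv.eq_symm_apply.symm
    simp only [hfiber, filter_eq', mem_univ, if_true, sum_singleton]
  g := Laplace.pdf
  g_pos := Laplace.pdf_pos
  g_int := Laplace.integrable_pdf
  g_norm := Laplace.integral_pdf
  g_abs_int := Laplace.integrable_abs_mul_pdf
  vq := 1
  vu := 9
  om := 117 / 17 * log (8 / 3)
  vq_pos := one_pos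
  vu_pos := by norm_num
  om_pos := by have := log_pos (show (1 : ℝ) < 8 / 3 by norm_num); positivity

lemma discGame_p (i : GrpI) (x : X2) (y : Cls) :
    discGame.p i x y = bern (sRate y) (x 0) * bern (zRate i) (x 1) := rfl

lemma pooledGame_p (i : GrpI) (x : X2) (y : Cls) :
    pooledGame.p i x y = bern (sRate y) (x 0) * bern (pooledZRate y) (x 1) * 1 := rfl

lemma discGame_lhd (x : X2) :
    discGame.lhd x = bern (sRate Cls.q) (x 0) / bern (sRate Cls.u) (x 0) := rfl

lemma pooledGame_lhd (x : X2) :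
    pooledGame.lhd x = bern (sRate Cls.q) (x 0) * bern (pooledZRate Cls.q) (x 1) /
      (bern (sRate Cls.u) (x 0) * bern (pooledZRate Cls.u) (x 1)) := rfl

lemma discGame_oneNotLV : discGame.OneNotLV := by
  rintro ⟨x, hx⟩
  obtain ⟨s, z, rfl⟩ := X2_eq_cons x
  cases s <;> norm_num [discGame_lhd, bern, sRate] at hx

lemma pooledGame_oneNotLV : pooledGame.OneNotLV := by
  rintro ⟨x, hx⟩
  obtain ⟨s, z, rfl⟩ := X2_eq_cons x
  cases s <;> cases z <;> norm_num [pooledGame_lhd, bern, sRate, pooledZRate] at hx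

def acceptTT (x : X2) : ℝ := if x = ![true, true] then 1 else 0

lemma acceptTT_isCbPolicy : IsCbPolicy acceptTT := fun x => by
  unfold acceptTT; split_ifs <;> norm_num

lemma gain_acceptTT (Γ : Game 2 fun _ => Bool) (i : GrpI) :
    Γ.gain i acceptTT = Γ.om * (Γ.p i ![true, true] Cls.q - Γ.p i ![true, true] Cls.u) := by
  simp [Game.gain, acceptTT]

lemma discGame_gain_w : discGame.gain GrpI.w acceptTT = log 4 := by
  rw [gain_acceptTT, discGame_p, discGame_p, show (4 : ℝ) = 2 ^ 2 by norm_num, log_pow]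
  norm_num [discGame, bern, sRate, zRate]
  ring

lemma discGame_gain_b : discGame.gain GrpI.b acceptTT = log 2 := by
  rw [gain_acceptTT, discGame_p, discGame_p]
  norm_num [discGame, bern, sRate, zRate]
  ring

lemma discGame_gain_ne : discGame.gain GrpI.w acceptTT ≠ discGame.gain GrpI.b acceptTT := by
  rw [discGame_gain_w, discGame_gain_b]
  exact (log_lt_log (by norm_num) (by norm_num)).ne'

lemma pooledGame_gain (i : GrpI) : pooledGame.gain i acceptTT = log (8 / 3) := by
  rw [gain_acceptTT, pooledGame_p, pooledGame_p]
  norm_num [pooledGame, bern, sRate, pooledZRate]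
  ring

lemma discGame_G_w : discGame.G (discGame.gain GrpI.w acceptTT) = 7 / 8 := by
  rw [discGame_gain_w]
  exact (Laplace.integral_Iic_pdf_log (by norm_num)).trans (by norm_num)

lemma discGame_G_b : discGame.G (discGame.gain GrpI.b acceptTT) = 3 / 4 := by
  rw [discGame_gain_b]
  exact (Laplace.integral_Iic_pdf_log (by norm_num)).trans (by norm_num)

lemma pooledGame_G (i : GrpI) : pooledGame.G (pooledGame.gain i acceptTT) = 13 / 16 := by
  rw [pooledGame_gain]
  exact (Laplace.integral_Iic_pdf_log (by norm_num)).trans (by norm_num)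

lemma qualMass_eq : discGame.qualMass (fun i => discGame.gain i acceptTT) =
    pooledGame.qualMass (fun i => pooledGame.gain i acceptTT) := by
  funext x
  obtain ⟨s, z, rfl⟩ := X2_eq_cons x
  simp only [Game.qualMass, discGame_G_w, discGame_G_b, pooledGame_G, discGame_p, pooledGame_p]
  cases s <;> cases z <;> norm_num [Game.lam, discGame, pooledGame, bern, sRate, zRate, pooledZRate]

lemma unqualMass_eq : discGame.unqualMass (fun i => discGame.gain i acceptTT) =
    pooledGame.unqualMass (fun i => pooledGame.gain i acceptTT) := by
  funext x
  obtain ⟨s, z, rfl⟩ := X2_eq_cons x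
  simp only [Game.unqualMass, discGame_G_w, discGame_G_b, pooledGame_G, discGame_p, pooledGame_p]
  cases s <;> cases z <;> norm_num [Game.lam, discGame, pooledGame, bern, sRate, zRate, pooledZRate]

lemma pooledGame_mucbRE : pooledGame.mucbRE (fun i => pooledGame.gain i acceptTT) =
    discGame.mucbRE (fun i => discGame.gain i acceptTT) :=
  (Game.mucbRE_eq_of_mass_eq qualMass_eq unqualMass_eq).symm

lemma pooledGame_fcbRE : pooledGame.fcbRE (fun i => pooledGame.gain i acceptTT) =
    discGame.fcbRE (fun i => discGame.gain i acceptTT) :=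
  (Game.fcbRE_eq_of_mass_eq qualMass_eq unqualMass_eq).symm

lemma discGame_firmOptimal (d : X2 → ℝ) (hd : IsCbPolicy d) :
    discGame.UFcb d (discGame.mucbRE fun i => discGame.gain i acceptTT)
        (discGame.fcbRE fun i => discGame.gain i acceptTT) ≤
      discGame.UFcb acceptTT (discGame.mucbRE fun i => discGame.gain i acceptTT)
        (discGame.fcbRE fun i => discGame.gain i acceptTT) := by
  rw [Game.UFcb_eq, Game.UFcb_eq]
  refine sum_mul_le_sum_mul_of_mem_Icc hd fun x => ?_
  obtain ⟨s, z, rfl⟩ := X2_eq_cons x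
  simp only [Game.qualMass, Game.unqualMass, discGame_G_w, discGame_G_b, discGame_p]
  cases s <;> cases z <;> norm_num [Game.lam, discGame, bern, sRate, zRate, acceptTT]

lemma discGame_isCbEquilibrium :
    discGame.IsCbEquilibrium (fun i => discGame.gain i acceptTT) acceptTT :=
  ⟨acceptTT_isCbPolicy, discGame.bestRespondsCb_gain acceptTT, discGame_firmOptimal⟩

lemma pooledGame_isCbEquilibrium :
    pooledGame.IsCbEquilibrium (fun i => pooledGame.gain i acceptTT) acceptTT := by
  refine ⟨acceptTT_isCbPolicy, pooledGame.bestRespondsCb_gain acceptTT, ?_⟩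
  rw [pooledGame_mucbRE, pooledGame_fcbRE]
  exact discGame_firmOptimal

end ColorBlindExample

open ColorBlindExample in
/-- **Theorem 2.** When data is color-blind, there does not exist an ideal
control: no color-blind control `k_cb` both (1) brings gains to the
discriminated group in every discriminatory equilibrium of every game, and
(2) has its controlled equilibria coincide with the non-discriminatory
equilibria in every game. -/
theorem no_ideal_control_with_color_blind_data :
    ¬∃ k : CbControl,
      (∀ (N : ℕ) (Xs : Fin N → Type) [∀ j, Fintype (Xs j)] [∀ j, Nonempty (Xs j)]
        (Γ : Game N Xs), Γ.OneNotLV →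
        ∀ (c : GrpI → ℝ) (dcb : ((j : Fin N) → Xs j) → ℝ),
          Γ.IsCbEquilibrium c dcb → c GrpI.w ≠ c GrpI.b →
          ∀ dh ∈ k.sets N Xs (Γ.mucbRE c) (Γ.fcbRE c),
            (∀ d' ∈ k.sets N Xs (Γ.mucbRE c) (Γ.fcbRE c),
              Γ.UFcb d' (Γ.mucbRE c) (Γ.fcbRE c) ≤
                Γ.UFcb dh (Γ.mucbRE c) (Γ.fcbRE c)) →
            Set.Icc
                (min (AR GrpI.w (fun _ => dh) (Γ.muRE c))
                  (AR GrpI.b (fun _ => dh) (Γ.muRE c)))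
                (max (AR GrpI.w (fun _ => dh) (Γ.muRE c))
                  (AR GrpI.b (fun _ => dh) (Γ.muRE c))) ⊂
              Set.Icc
                (min (AR GrpI.w (fun _ => dcb) (Γ.muRE c))
                  (AR GrpI.b (fun _ => dcb) (Γ.muRE c)))
                (max (AR GrpI.w (fun _ => dcb) (Γ.muRE c))
                  (AR GrpI.b (fun _ => dcb) (Γ.muRE c)))) ∧
      (∀ (N : ℕ) (Xs : Fin N → Type) [∀ j, Fintype (Xs j)] [∀ j, Nonempty (Xs j)]
        (Γ : Game N Xs), Γ.OneNotLV →
        ∀ (c : GrpI → ℝ) (dcb : ((j : Fin N) → Xs j) → ℝ),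
          Γ.IsCbControlledEq (k.sets N Xs (Γ.mucbRE c) (Γ.fcbRE c)) c dcb ↔
            Γ.IsCbEquilibrium c dcb ∧ c GrpI.w = c GrpI.b) := by
  rintro ⟨k, hgains, hcontrolled⟩
  obtain ⟨hmem, -, hopt⟩ := (hcontrolled 2 _ pooledGame pooledGame_oneNotLV _ acceptTT).mpr
    ⟨pooledGame_isCbEquilibrium, rfl⟩
  rw [pooledGame_mucbRE, pooledGame_fcbRE] at hmem hopt
  exact ssubset_irrefl _ (hgains 2 _ discGame discGame_oneNotLV _ acceptTT
    discGame_isCbEquilibrium discGame_gain_ne acceptTT hmem hopt)
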